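/- Bound Hypothesis Property: if t is a normal simply typed λ-term (with types built from atoms, ⊥, ∧, →; term formers: variables, λ-abstraction, application, pairing, projections, and ex-falso applied to atomic types) with free variables x₁:A₁,…,xₙ:Aₙ and t : A, and z : B is a variable occurring bound in t, then either B is a proper subformula of a prime factor of A, or B is a strong subformula of one of A₁,…,Aₙ. -/

import Mathlib

/-- Formulas built from atoms, ⊥, ∧ and →. -/
inductive Form where
  | atom : ℕ → Form
  | bot  : Form
  | conj : Form → Form → Form
  | imp  : Form → Form → Form
deriving DecidableEq

/-- The subformula relation. -/
inductive Subform : Form → Form → Prop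
  | refl (A) : Subform A A
  | conjL : Subform B A₁ → Subform B (Form.conj A₁ A₂)
  | conjR : Subform B A₂ → Subform B (Form.conj A₁ A₂)
  | impL : Subform B A₁ → Subform B (Form.imp A₁ A₂)
  | impR : Subform B A₂ → Subform B (Form.imp A₁ A₂)

/-- Proper subformula: a subformula distinct from the whole formula. -/
def ProperSub (B A : Form) : Prop := Subform B A ∧ B ≠ A

/-- A formula is prime if it is not a conjunction. -/
def PrimeForm (A : Form) : Prop := ∀ X Y, A ≠ Form.conj X Y

/-- The prime factors of a formula: split top-level conjunctions recursively. -/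
def primeFactors : Form → List Form
  | Form.conj A B => primeFactors A ++ primeFactors B
  | A => [A]

/-- B is a strong subformula of A if B is a proper subformula of some prime
proper subformula of A. -/
def StrongSub (B A : Form) : Prop :=
  ∃ C, PrimeForm C ∧ ProperSub C A ∧ ProperSub B C

/-- Simply typed λ-terms with named variables: variables, λ-abstraction,
application, pairing, projections, and ex falso (targeting atomic types). -/
inductive Tm where
  | var : ℕ → Tm
  | lam : ℕ → Form → Tm → Tm
  | app : Tm → Tm → Tm
  | pair : Tm → Tm → Tm
  | proj : Bool → Tm → Tm
  | efq : ℕ → Tm → Tm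
deriving DecidableEq

/-- Free variables of a term. -/
def FV : Tm → Set ℕ
  | .var x => {x}
  | .lam x _ u => FV u \ {x}
  | .app u w => FV u ∪ FV w
  | .pair u v => FV u ∪ FV v
  | .proj _ u => FV u
  | .efq _ u => FV u

def upd (Γ : ℕ → Option Form) (x : ℕ) (A : Form) : ℕ → Option Form :=
  fun y => if y = x then some A else Γ y

/-- Typing judgment for the simply typed λ-calculus. -/
inductive Typed : (ℕ → Option Form) → Tm → Form → Prop
  | var : Γ x = some A → Typed Γ (.var x) A
  | lam : Typed (upd Γ x A) u B → Typed Γ (.lam x A u) (.imp A B)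
  | app : Typed Γ u (.imp A B) → Typed Γ w A → Typed Γ (.app u w) B
  | pair : Typed Γ u A → Typed Γ v B → Typed Γ (.pair u v) (.conj A B)
  | projL : Typed Γ u (.conj A B) → Typed Γ (.proj false u) A
  | projR : Typed Γ u (.conj A B) → Typed Γ (.proj true u) B
  | efq : Typed Γ u .bot → Typed Γ (.efq n u) (.atom n)

def IsLam : Tm → Prop
  | .lam _ _ _ => True
  | _ => False

def IsPair : Tm → Prop
  | .pair _ _ => True
  | _ => False

/-- A term is normal if it contains no β-redex and no projection redex. -/
def NormalTm : Tm → Prop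
  | .var _ => True
  | .lam _ _ u => NormalTm u
  | .app u w => NormalTm u ∧ NormalTm w ∧ ¬ IsLam u
  | .pair u v => NormalTm u ∧ NormalTm v
  | .proj _ u => NormalTm u ∧ ¬ IsPair u
  | .efq _ u => NormalTm u

/-- The subterm relation. -/
inductive Subterm : Tm → Tm → Prop
  | refl (t) : Subterm t t
  | lam : Subterm s u → Subterm s (.lam x A u)
  | appL : Subterm s u → Subterm s (.app u w)
  | appR : Subterm s w → Subterm s (.app u w)
  | pairL : Subterm s u → Subterm s (.pair u v)
  | pairR : Subterm s v → Subterm s (.pair u v)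
  | proj : Subterm s u → Subterm s (.proj b u)
  | efq : Subterm s u → Subterm s (.efq n u)

/-- A variable of type B occurs bound in t: some λ-abstraction in t binds a
variable of type B which actually occurs in its body. -/
def BoundOcc (B : Form) (t : Tm) : Prop :=
  ∃ x u, Subterm (.lam x B u) t ∧ x ∈ FV u

/-! Induction on the typing derivation, proving simultaneously a stronger invariant for neutral
terms (variables, applications, projections): their type is a subformula of the type of one of
their free variables, and every bound variable type is a strong subformula of such a type.
Normality makes the function of an application and the argument of a projection neutral. In
an application `u w` with `u : A' → A` neutral, `A' → A` sits inside the type `C` of a free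
variable, so each prime factor of `A'` is a prime proper subformula of `C`: the first
alternative for `w` becomes the second one for `u w`. -/

namespace Form

def size : Form → ℕ
  | .atom _ => 1
  | .bot => 1
  | .conj A B => A.size + B.size + 1
  | .imp A B => A.size + B.size + 1

end Form

section Formulas

variable {A B C D : Form}

theorem Subform.trans (hAB : Subform A B) (hBC : Subform B C) : Subform A C := by
  induction hBC with
  | refl => exact hAB
  | conjL _ ih => exact .conjL ih
  | conjR _ ih => exact .conjR ih
  | impL _ ih => exact .impL ih
  | impR _ ih => exact .impR ih

theorem Subform.size_le (h : Subform B A) : B.size ≤ A.size := by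
  induction h with
  | refl => exact le_rfl
  | conjL _ ih | conjR _ ih | impL _ ih | impR _ ih => simp only [Form.size]; omega

theorem Subform.eq_of_size_le (h : Subform B A) (hsize : A.size ≤ B.size) : B = A := by
  cases h with
  | refl => rfl
  | conjL h | conjR h | impL h | impR h =>
    have := h.size_le
    simp only [Form.size] at hsize
    omega

theorem ProperSub.size_lt (h : ProperSub B A) : B.size < A.size :=
  lt_of_le_of_ne h.1.size_le fun hsize => h.2 (h.1.eq_of_size_le hsize.ge)

theorem ProperSub.of_size_lt (h : Subform B A) (hsize : B.size < A.size) : ProperSub B A :=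
  ⟨h, by rintro rfl; omega⟩

theorem ProperSub.trans_subform (hBC : ProperSub B C) (hCD : Subform C D) : ProperSub B D :=
  .of_size_lt (hBC.1.trans hCD) (hBC.size_lt.trans_le hCD.size_le)

theorem ProperSub.imp_left (h : Subform B C) : ProperSub B (.imp C D) :=
  .of_size_lt (.impL h) (by have := h.size_le; simp only [Form.size]; omega)

theorem ProperSub.imp_right (h : Subform B D) : ProperSub B (.imp C D) :=
  .of_size_lt (.impR h) (by have := h.size_le; simp only [Form.size]; omega)

theorem not_properSub_bot : ¬ ProperSub B .bot := by
  rintro ⟨⟨⟩, hne⟩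
  exact hne rfl

theorem StrongSub.subform (h : StrongSub B D) : Subform B D :=
  let ⟨_, _, hCD, hBC⟩ := h
  hBC.1.trans hCD.1

theorem mem_primeFactors_conj :
    C ∈ primeFactors (.conj A B) ↔ C ∈ primeFactors A ∨ C ∈ primeFactors B :=
  List.mem_append

theorem primeForm_and_subform_of_mem_primeFactors (h : C ∈ primeFactors A) :
    PrimeForm C ∧ Subform C A := by
  induction A with
  | conj A₁ A₂ ih₁ ih₂ =>
    rcases mem_primeFactors_conj.1 h with h | h
    · exact ⟨(ih₁ h).1, .conjL (ih₁ h).2⟩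
    · exact ⟨(ih₂ h).1, .conjR (ih₂ h).2⟩
  | atom | bot | imp =>
    obtain rfl := List.mem_singleton.1 h
    exact ⟨fun _ _ => Form.noConfusion, .refl _⟩

end Formulas

section Terms

variable {Γ : ℕ → Option Form} {t u w : Tm} {x n : ℕ} {b : Bool}
  {A A' A₁ A₂ B C D : Form}

theorem not_boundOcc_var : ¬ BoundOcc B (.var x) := by
  rintro ⟨_, _, ⟨⟩, _⟩

theorem BoundOcc.of_lam (h : BoundOcc B (.lam x C u)) :
    (B = C ∧ x ∈ FV u) ∨ BoundOcc B u := by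
  obtain ⟨y, v, hs, hy⟩ := h
  cases hs with
  | refl => exact .inl ⟨rfl, hy⟩
  | lam hs => exact .inr ⟨y, v, hs, hy⟩

theorem BoundOcc.of_app (h : BoundOcc B (.app u w)) : BoundOcc B u ∨ BoundOcc B w := by
  obtain ⟨y, v, hs, hy⟩ := h
  cases hs with
  | appL hs => exact .inl ⟨y, v, hs, hy⟩
  | appR hs => exact .inr ⟨y, v, hs, hy⟩

theorem BoundOcc.of_pair (h : BoundOcc B (.pair u w)) : BoundOcc B u ∨ BoundOcc B w := by
  obtain ⟨y, v, hs, hy⟩ := h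
  cases hs with
  | pairL hs => exact .inl ⟨y, v, hs, hy⟩
  | pairR hs => exact .inr ⟨y, v, hs, hy⟩

theorem BoundOcc.of_proj (h : BoundOcc B (.proj b u)) : BoundOcc B u := by
  obtain ⟨y, v, hs, hy⟩ := h
  cases hs with
  | proj hs => exact ⟨y, v, hs, hy⟩

theorem BoundOcc.of_efq (h : BoundOcc B (.efq n u)) : BoundOcc B u := by
  obtain ⟨y, v, hs, hy⟩ := h
  cases hs with
  | efq hs => exact ⟨y, v, hs, hy⟩

def Neutral : Tm → Prop
  | .var _ | .app _ _ | .proj _ _ => True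
  | _ => False

theorem Typed.neutral_of_imp (h : Typed Γ t (.imp A B)) (hlam : ¬ IsLam t) : Neutral t := by
  cases h with
  | lam => exact absurd trivial hlam
  | _ => trivial

theorem Typed.neutral_of_conj (h : Typed Γ t (.conj A B)) (hpair : ¬ IsPair t) : Neutral t := by
  cases h with
  | pair => exact absurd trivial hpair
  | _ => trivial

def SubformOfFreeVar (Γ : ℕ → Option Form) (t : Tm) (A : Form) : Prop :=
  ∃ x ∈ FV t, ∃ C, Γ x = some C ∧ Subform A C

def StrongSubOfFreeVar (Γ : ℕ → Option Form) (t : Tm) (B : Form) : Prop :=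
  ∃ x ∈ FV t, ∃ D, Γ x = some D ∧ StrongSub B D

def BoundHypProperty (Γ : ℕ → Option Form) (t : Tm) (A : Form) : Prop :=
  ∀ B, BoundOcc B t → (∃ P ∈ primeFactors A, ProperSub B P) ∨ StrongSubOfFreeVar Γ t B

def NeutralInvariant (Γ : ℕ → Option Form) (t : Tm) (A : Form) : Prop :=
  SubformOfFreeVar Γ t A ∧ ∀ B, BoundOcc B t → StrongSubOfFreeVar Γ t B

theorem StrongSubOfFreeVar.mono (h : StrongSubOfFreeVar Γ u B) (hFV : FV u ⊆ FV t) :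
    StrongSubOfFreeVar Γ t B :=
  let ⟨x, hx, D, hΓ, hBD⟩ := h
  ⟨x, hFV hx, D, hΓ, hBD⟩

theorem NeutralInvariant.boundHypProperty (h : NeutralInvariant Γ t A) :
    BoundHypProperty Γ t A :=
  fun B hB => .inr (h.2 B hB)

theorem neutralInvariant_var (hx : Γ x = some A) : NeutralInvariant Γ (.var x) A :=
  ⟨⟨x, rfl, A, hx, .refl A⟩, fun _ hB => absurd hB not_boundOcc_var⟩

theorem NeutralInvariant.app (hu : NeutralInvariant Γ u (.imp A' A))
    (hw : BoundHypProperty Γ w A') : NeutralInvariant Γ (.app u w) A := by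
  obtain ⟨⟨x, hx, C, hΓx, hsub⟩, hbound⟩ := hu
  refine ⟨⟨x, .inl hx, C, hΓx, (Subform.impR (.refl A)).trans hsub⟩, fun B hB => ?_⟩
  rcases hB.of_app with hB | hB
  · exact (hbound B hB).mono Set.subset_union_left
  rcases hw B hB with ⟨P, hP, hBP⟩ | hB
  · obtain ⟨hprime, hPA'⟩ := primeForm_and_subform_of_mem_primeFactors hP
    exact ⟨x, .inl hx, C, hΓx, P, hprime, (ProperSub.imp_left hPA').trans_subform hsub, hBP⟩
  · exact hB.mono Set.subset_union_right

theorem NeutralInvariant.proj (hu : NeutralInvariant Γ u (.conj A₁ A₂))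
    (hA : Subform A (.conj A₁ A₂)) : NeutralInvariant Γ (.proj b u) A :=
  let ⟨⟨x, hx, C, hΓx, hsub⟩, hbound⟩ := hu
  ⟨⟨x, hx, C, hΓx, hA.trans hsub⟩, fun B hB => hbound B hB.of_proj⟩

theorem BoundHypProperty.lam (hu : BoundHypProperty (upd Γ x C) u D) :
    BoundHypProperty Γ (.lam x C u) (.imp C D) := by
  have hmem : Form.imp C D ∈ primeFactors (.imp C D) := List.mem_singleton_self _
  intro B hB
  rcases hB.of_lam with ⟨rfl, -⟩ | hB
  · exact .inl ⟨_, hmem, .imp_left (.refl B)⟩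
  rcases hu B hB with ⟨P, hP, hBP⟩ | ⟨y, hy, D', hΓy, hBD'⟩
  · have hPD := (primeForm_and_subform_of_mem_primeFactors hP).2
    exact .inl ⟨_, hmem, .imp_right (hBP.1.trans hPD)⟩
  by_cases hyx : y = x
  · obtain rfl : C = D' := by simpa [upd, hyx] using hΓy
    exact .inl ⟨_, hmem, .imp_left hBD'.subform⟩
  · exact .inr ⟨y, ⟨hy, hyx⟩, D', by simpa [upd, hyx] using hΓy, hBD'⟩

theorem BoundHypProperty.pair (hu : BoundHypProperty Γ u A) (hw : BoundHypProperty Γ w B) :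
    BoundHypProperty Γ (.pair u w) (.conj A B) := by
  intro C hC
  rcases hC.of_pair with hC | hC
  · rcases hu C hC with ⟨P, hP, hCP⟩ | hC
    · exact .inl ⟨P, mem_primeFactors_conj.2 (.inl hP), hCP⟩
    · exact .inr (hC.mono Set.subset_union_left)
  · rcases hw C hC with ⟨P, hP, hCP⟩ | hC
    · exact .inl ⟨P, mem_primeFactors_conj.2 (.inr hP), hCP⟩
    · exact .inr (hC.mono Set.subset_union_right)

theorem BoundHypProperty.efq (hu : BoundHypProperty Γ u .bot) :
    BoundHypProperty Γ (.efq n u) (.atom n) := by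
  intro B hB
  rcases hu B hB.of_efq with ⟨P, hP, hBP⟩ | hB
  · obtain rfl := List.mem_singleton.1 hP
    exact absurd hBP not_properSub_bot
  · exact .inr hB

theorem Typed.neutralInvariant_and_boundHypProperty (ht : Typed Γ t A) (hnf : NormalTm t) :
    (Neutral t → NeutralInvariant Γ t A) ∧ BoundHypProperty Γ t A := by
  induction ht with
  | var hx =>
    exact ⟨fun _ => neutralInvariant_var hx, (neutralInvariant_var hx).boundHypProperty⟩
  | lam _ ih => exact ⟨False.elim, (ih hnf).2.lam⟩
  | app hu _ ihu ihw =>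
    obtain ⟨hnu, hnw, hlam⟩ := hnf
    have h := ((ihu hnu).1 (hu.neutral_of_imp hlam)).app (ihw hnw).2
    exact ⟨fun _ => h, h.boundHypProperty⟩
  | pair _ _ ihu ihw => exact ⟨False.elim, (ihu hnf.1).2.pair (ihw hnf.2).2⟩
  | projL hu ih =>
    have h : NeutralInvariant _ (.proj false _) _ :=
      ((ih hnf.1).1 (hu.neutral_of_conj hnf.2)).proj (.conjL (.refl _))
    exact ⟨fun _ => h, h.boundHypProperty⟩
  | projR hu ih =>
    have h : NeutralInvariant _ (.proj true _) _ :=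
      ((ih hnf.1).1 (hu.neutral_of_conj hnf.2)).proj (.conjR (.refl _))
    exact ⟨fun _ => h, h.boundHypProperty⟩
  | efq _ ih => exact ⟨False.elim, (ih hnf).2.efq⟩

end Terms

/-- Bound Hypothesis Property: in a normal simply typed λ-term t : A with free
variables typed by Γ, the type B of any bound variable occurring in t is a
proper subformula of a prime factor of A, or a strong subformula of the type
of one of the free variables of t. -/
theorem bound_hypothesis_property (Γ : ℕ → Option Form) (t : Tm) (A B : Form)
    (ht : Typed Γ t A) (hnf : NormalTm t) (hB : BoundOcc B t) :
    (∃ P ∈ primeFactors A, ProperSub B P) ∨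
    (∃ x ∈ FV t, ∃ D, Γ x = some D ∧ StrongSub B D) :=
  (ht.neutralInvariant_and_boundHypProperty hnf).2 B hB
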